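/- arXiv:0912.3227 — 3 statements merged into one kernel-verified Lean document; each statement's English description precedes it below -/
import Mathlib

section
/- For every integer p ≥ 1, ∑_{k=1}^∞ H_k^(p)/(k(k+1)(k+2)) = (1/2)(∑_{j=1}^p (-1)^(j-1) ζ(p-j+2) + (-1)^p). -/
open scoped BigOperators
open Finset

/-- Polylogarithm Li_p(x) = ∑_{k≥1} x^k / k^p. -/
noncomputable def Li (p : ℕ) (x : ℝ) : ℝ := ∑' k : ℕ, x ^ (k + 1) / ((k : ℝ) + 1) ^ p

/-- Riemann zeta at a natural argument, as a series. -/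
noncomputable def zetaS (s : ℕ) : ℝ := ∑' n : ℕ, 1 / ((n : ℝ) + 1) ^ s

/-- Generalized harmonic number H_n^{(p)}. -/
noncomputable def H (n p : ℕ) : ℝ := ∑ j ∈ Finset.Icc 1 n, 1 / (j : ℝ) ^ p

/-- Digamma function: logarithmic derivative of Gamma. -/
noncomputable def digamma (x : ℝ) : ℝ := deriv (fun y : ℝ => Real.log (Real.Gamma y)) x

lemma tele_hasSum {g : ℕ → ℝ} (hmono : ∀ n, g (n + 1) ≤ g n)
    (h0 : Filter.Tendsto g Filter.atTop (nhds 0)) :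
    HasSum (fun n => g n - g (n + 1)) (g 0) := by
  rw [hasSum_iff_tendsto_nat_of_nonneg (fun i => sub_nonneg.2 (hmono i))]
  simp only [Finset.sum_range_sub']
  simpa using Filter.Tendsto.const_sub (g 0) h0

lemma tendsto_inv_aux (c : ℝ) (hc : 0 ≤ c) :
    Filter.Tendsto (fun n : ℕ => 1 / ((n : ℝ) + c + 1)) Filter.atTop (nhds 0) := by
  apply squeeze_zero (fun n => by positivity) (g := fun n : ℕ => 1 / ((n : ℝ) + 1))
  · intro n
    apply one_div_le_one_div_of_le (by positivity)
    linarith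
  · exact tendsto_one_div_add_atTop_nhds_zero_nat

/-- tail sum of 1/((k+c+1)(k+c+2)(k+c+3)) -/
lemma tail_hasSum (c : ℝ) (hc : 0 ≤ c) :
    HasSum (fun k : ℕ => 1 / (((k : ℝ) + c + 1) * ((k : ℝ) + c + 2) * ((k : ℝ) + c + 3)))
      (1 / (2 * ((c + 1) * (c + 2)))) := by
  set g : ℕ → ℝ := fun k => 1 / (2 * (((k : ℝ) + c + 1) * ((k : ℝ) + c + 2))) with hg
  have key := tele_hasSum (g := g)
    (fun n => by
      apply one_div_le_one_div_of_le (by positivity)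
      push_cast
      nlinarith [Nat.cast_nonneg (α := ℝ) n])
    (by
      apply squeeze_zero (fun n => by positivity) (g := fun n : ℕ => 1 / ((n : ℝ) + c + 1))
      · intro n
        simp only [hg]
        apply one_div_le_one_div_of_le (by positivity)
        nlinarith [Nat.cast_nonneg (α := ℝ) n]
      · exact tendsto_inv_aux c hc)
  have hfun : (fun n : ℕ => g n - g (n + 1))
      = fun k : ℕ => 1 / (((k : ℝ) + c + 1) * ((k : ℝ) + c + 2) * ((k : ℝ) + c + 3)) := by
    funext k
    simp only [hg]
    have h1 : (0:ℝ) < (k : ℝ) + c + 1 := by positivity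
    have h2 : (0:ℝ) < (k : ℝ) + c + 2 := by positivity
    have h3 : (0:ℝ) < (k : ℝ) + c + 3 := by positivity
    push_cast
    field_simp
    ring
  have hg0 : g 0 = 1 / (2 * ((c + 1) * (c + 2))) := by simp [hg]
  rw [hfun, hg0] at key
  exact key

lemma pf (p : ℕ) (x : ℝ) (hx : 1 ≤ x) :
    (-1 : ℝ) ^ p * (1 / (x ^ (p + 1) * (x + 1)))
      = (∑ i ∈ range p, (-1 : ℝ) ^ (i + 1) * (1 / x ^ (i + 2))) + (1 / x - 1 / (x + 1)) := by
  have hx0 : (0:ℝ) < x := lt_of_lt_of_le one_pos hx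
  have hx1 : (0:ℝ) < x + 1 := by linarith
  induction p with
  | zero => simp; field_simp; ring
  | succ p ih =>
    have hxp : x ^ (p + 1) ≠ 0 := by positivity
    have hxp2 : x ^ (p + 1 + 1) ≠ 0 := by positivity
    have key : (-1 : ℝ) ^ (p + 1) * (1 / (x ^ (p + 1 + 1) * (x + 1)))
        = (-1 : ℝ) ^ (p + 1) * (1 / x ^ (p + 1 + 1))
          + (-1 : ℝ) ^ p * (1 / (x ^ (p + 1) * (x + 1))) := by
      field_simp
      ring
    rw [Finset.sum_range_succ, key, ih]
    ring

lemma reindex (p : ℕ) (z : ℕ → ℝ) :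
    ∑ j ∈ Finset.Icc 1 p, (-1 : ℝ) ^ (j - 1) * z (p - j + 2)
      = (-1 : ℝ) ^ p * ∑ i ∈ range p, (-1 : ℝ) ^ (i + 1) * z (i + 2) := by
  rw [Finset.mul_sum]
  refine Finset.sum_nbij' (fun j => p - j) (fun i => p - i) ?_ ?_ ?_ ?_ ?_
  · intro j hj; simp at hj ⊢; omega
  · intro i hi; simp at hi ⊢; omega
  · intro j hj; simp at hj ⊢; omega
  · intro i hi; simp at i hi ⊢; omega
  · intro j hj
    simp only [Finset.mem_Icc] at hj
    have hsign : (-1 : ℝ) ^ (j - 1) = (-1 : ℝ) ^ p * (-1 : ℝ) ^ ((p - j) + 1) := by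
      rw [← pow_add, show p + (p - j + 1) = (j - 1) + 2 * (p - j + 1) by omega,
        pow_add, pow_mul]
      norm_num
    rw [hsign]; ring_nf

lemma zsummable (s : ℕ) (hs : 2 ≤ s) : Summable (fun n : ℕ => 1 / ((n : ℝ) + 1) ^ s) := by
  have h1 : Summable (fun n : ℕ => 1 / (n : ℝ) ^ s) := Real.summable_one_div_nat_pow.2 (by omega)
  have := (summable_nat_add_iff 1).2 h1
  refine this.congr fun n => by push_cast; ring

lemma Hrange (n p : ℕ) : H n p = ∑ j ∈ range n, 1 / ((j : ℝ) + 1) ^ p := by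
  induction n with
  | zero => simp [H]
  | succ n ih =>
    rw [H, Finset.sum_Icc_succ_top (by omega), ← H, ih, Finset.sum_range_succ]
    push_cast
    ring

theorem stmt8 (p : ℕ) (hp : 1 ≤ p) :
    ∑' k : ℕ, H (k + 1) p / (((k : ℝ) + 1) * ((k : ℝ) + 2) * ((k : ℝ) + 3))
      = (1 / 2) * ((∑ j ∈ Finset.Icc 1 p, (-1 : ℝ) ^ (j - 1) * zetaS (p - j + 2))
          + (-1 : ℝ) ^ p) := by
  set a : ℕ → ℝ := fun k => 1 / (((k : ℝ) + 1) * ((k : ℝ) + 2) * ((k : ℝ) + 3)) with ha_def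
  set c : ℕ → ℝ := fun j => 1 / ((j : ℝ) + 1) ^ p with hc_def
  set T : ℕ → ℝ := fun j => 1 / (2 * (((j : ℝ) + 1) * ((j : ℝ) + 2))) with hT_def
  have ha_nonneg : ∀ k, 0 ≤ a k := fun k => by positivity
  have hc_nonneg : ∀ j, 0 ≤ c j := fun j => by positivity
  have hT_nonneg : ∀ j, 0 ≤ T j := fun j => by positivity
  -- tail sums
  have htail : ∀ j : ℕ, HasSum (fun k => a (k + j)) (T j) := by
    intro j
    exact (tail_hasSum (j : ℝ) (Nat.cast_nonneg j)).congr_fun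
      (fun k => by simp only [ha_def]; push_cast; ring)
  have ha_sum : Summable a := by
    have := htail 0
    simpa using this.summable
  -- the double-sum function
  set F : ℕ → ℕ → ℝ := fun j k => if j ≤ k then c j * a k else 0 with hF_def
  have hF_nonneg : ∀ j k, 0 ≤ F j k := by
    intro j k; simp only [hF_def]
    split
    · exact mul_nonneg (hc_nonneg j) (ha_nonneg k)
    · exact le_refl 0
  have hFrow : ∀ j, HasSum (F j) (c j * T j) := by
    intro j
    have hshift : HasSum (fun k => F j (k + j)) (c j * T j) := by
      refine HasSum.congr_fun ((htail j).mul_left (c j)) ?_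
      intro k
      simp only [hF_def, if_pos (Nat.le_add_left j k)]
    rw [hasSum_nat_add_iff j] at hshift
    have hz : ∑ i ∈ range j, F j i = 0 := by
      apply Finset.sum_eq_zero
      intro i hi
      rw [Finset.mem_range] at hi
      simp only [hF_def]
      rw [if_neg (by omega)]
    rwa [hz, add_zero] at hshift
  have hcT_le : ∀ j, c j * T j ≤ 1 / ((j : ℝ) + 1) ^ 2 := by
    intro j
    have hx : (1:ℝ) ≤ (j : ℝ) + 1 := by
      have := Nat.cast_nonneg (α := ℝ) j; linarith
    have hcle : c j ≤ 1 := by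
      simp only [hc_def]
      rw [div_le_one (by positivity)]
      exact one_le_pow₀ hx
    have hTle : T j ≤ 1 / ((j : ℝ) + 1) ^ 2 := by
      simp only [hT_def]
      apply one_div_le_one_div_of_le (by positivity)
      nlinarith [Nat.cast_nonneg (α := ℝ) j]
    calc c j * T j ≤ 1 * (1 / ((j : ℝ) + 1) ^ 2) :=
          mul_le_mul hcle hTle (hT_nonneg j) zero_le_one
      _ = 1 / ((j : ℝ) + 1) ^ 2 := one_mul _
  have hcT_summable : Summable (fun j => c j * T j) :=
    Summable.of_nonneg_of_le (fun j => mul_nonneg (hc_nonneg j) (hT_nonneg j)) hcT_le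
      (zsummable 2 le_rfl)
  -- Fubini
  have hF_unc : Summable (Function.uncurry F) :=
    (summable_prod_of_nonneg (f := Function.uncurry F) (fun x => hF_nonneg x.1 x.2)).2
      ⟨fun j => (hFrow j).summable,
        hcT_summable.congr fun j => ((hFrow j).tsum_eq).symm⟩
  have hswap : ∑' k, ∑' j, F j k = ∑' j, ∑' k, F j k := Summable.tsum_comm hF_unc
  -- LHS equals double sum
  have hL : ∀ k : ℕ, H (k + 1) p / (((k : ℝ) + 1) * ((k : ℝ) + 2) * ((k : ℝ) + 3))
      = ∑' j, F j k := by
    intro k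
    rw [tsum_eq_sum (s := range (k + 1)) (f := fun j => F j k)
      (by
        intro j hj
        rw [Finset.mem_range] at hj
        simp only [hF_def]
        rw [if_neg (by omega)])]
    have : ∑ j ∈ range (k + 1), F j k = (∑ j ∈ range (k + 1), c j) * a k := by
      rw [Finset.sum_mul]
      refine Finset.sum_congr rfl fun j hj => ?_
      rw [Finset.mem_range] at hj
      simp only [hF_def]
      rw [if_pos (by omega)]
    rw [this, Hrange, ha_def, div_eq_mul_one_div]
  -- per-j closed form
  have hper : ∀ j : ℕ, c j * T j
      = (1 / 2) * ((-1 : ℝ) ^ p *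
          ((∑ i ∈ range p, (-1 : ℝ) ^ (i + 1) * (1 / ((j : ℝ) + 1) ^ (i + 2)))
            + (1 / ((j : ℝ) + 1) - 1 / ((j : ℝ) + 2)))) := by
    intro j
    set x : ℝ := (j : ℝ) + 1 with hx_def
    have hx : 1 ≤ x := by
      have := Nat.cast_nonneg (α := ℝ) j; simp only [hx_def]; linarith
    have hx0 : (0:ℝ) < x := by linarith
    have hj2 : (j : ℝ) + 2 = x + 1 := by simp only [hx_def]; ring
    have hsq : ((-1 : ℝ) ^ p) * ((-1 : ℝ) ^ p) = 1 := by
      rw [← pow_add, show p + p = 2 * p by ring, pow_mul]; norm_num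
    have h1 : c j * T j = (1 / 2) * (1 / (x ^ (p + 1) * (x + 1))) := by
      simp only [hc_def, hT_def, ← hx_def, hj2]
      rw [← hj2]
      have : ((j : ℝ) + 2) = x + 1 := hj2
      field_simp
      ring
    rw [hj2, ← pf p x hx, h1]
    linear_combination (-(1 / 2) * (1 / (x ^ (p + 1) * (x + 1)))) * hsq
  -- summables for the per-j pieces
  have hu_summable : ∀ i ∈ range p,
      Summable (fun j : ℕ => (-1 : ℝ) ^ (i + 1) * (1 / ((j : ℝ) + 1) ^ (i + 2))) := by
    intro i _
    exact (zsummable (i + 2) (by omega)).mul_left _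
  have hv : HasSum (fun j : ℕ => 1 / ((j : ℝ) + 1) - 1 / ((j : ℝ) + 2)) 1 := by
    have key := tele_hasSum (g := fun j : ℕ => 1 / ((j : ℝ) + 1))
      (fun n => by
        apply one_div_le_one_div_of_le (by positivity)
        push_cast; linarith)
      tendsto_one_div_add_atTop_nhds_zero_nat
    have hfun : (fun n : ℕ => 1 / ((n : ℝ) + 1) - 1 / (((n + 1 : ℕ) : ℝ) + 1))
        = fun j : ℕ => 1 / ((j : ℝ) + 1) - 1 / ((j : ℝ) + 2) := by
      funext n; push_cast; ring
    rw [hfun] at key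
    simpa using key
  have hu_sum : Summable (fun j : ℕ =>
      ∑ i ∈ range p, (-1 : ℝ) ^ (i + 1) * (1 / ((j : ℝ) + 1) ^ (i + 2))) :=
    summable_sum hu_summable
  -- compute
  calc ∑' k : ℕ, H (k + 1) p / (((k : ℝ) + 1) * ((k : ℝ) + 2) * ((k : ℝ) + 3))
      = ∑' k, ∑' j, F j k := tsum_congr hL
    _ = ∑' j, ∑' k, F j k := hswap
    _ = ∑' j, c j * T j := tsum_congr fun j => (hFrow j).tsum_eq
    _ = ∑' j : ℕ, (1 / 2) * ((-1 : ℝ) ^ p *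
          ((∑ i ∈ range p, (-1 : ℝ) ^ (i + 1) * (1 / ((j : ℝ) + 1) ^ (i + 2)))
            + (1 / ((j : ℝ) + 1) - 1 / ((j : ℝ) + 2)))) := tsum_congr hper
    _ = (1 / 2) * ((-1 : ℝ) ^ p *
          ((∑' j : ℕ, ∑ i ∈ range p, (-1 : ℝ) ^ (i + 1) * (1 / ((j : ℝ) + 1) ^ (i + 2)))
            + (∑' j : ℕ, (1 / ((j : ℝ) + 1) - 1 / ((j : ℝ) + 2))))) := by
        rw [tsum_mul_left, tsum_mul_left, Summable.tsum_add hu_sum hv.summable]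
    _ = (1 / 2) * ((-1 : ℝ) ^ p *
          ((∑ i ∈ range p, (-1 : ℝ) ^ (i + 1) * zetaS (i + 2)) + 1)) := by
        rw [Summable.tsum_finsetSum hu_summable, hv.tsum_eq]
        have hz : ∀ i ∈ range p, (∑' b : ℕ, (-1 : ℝ) ^ (i + 1) * (1 / ((b : ℝ) + 1) ^ (i + 2)))
            = (-1 : ℝ) ^ (i + 1) * zetaS (i + 2) := by
          intro i _
          rw [tsum_mul_left]
          rfl
        rw [Finset.sum_congr rfl hz]
    _ = (1 / 2) * ((∑ j ∈ Finset.Icc 1 p, (-1 : ℝ) ^ (j - 1) * zetaS (p - j + 2))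
          + (-1 : ℝ) ^ p) := by
        rw [reindex p zetaS]
        have : ((-1 : ℝ) ^ p) * ((-1 : ℝ) ^ p) = 1 := by
          rw [← pow_add, show p + p = 2 * p by ring, pow_mul]; norm_num
        ring_nf
end

section
/- For integers n ≥ 2 and p ≥ 1, n! ∑_{k=1}^∞ H_k^(p)/(k(k+1)···(k+n)) = (n-1)! ∑_{k=1}^∞ 1/(k^(p+1)(k+1)···(k+n-1)); that is, σ_n(p) = δ_{n-1}(p+1). -/
open scoped BigOperators
open Finset Nat

/-- A n k = 1/((k+1)(k+2)...(k+n+1)) -/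
noncomputable def Afun (n k : ℕ) : ℝ := 1 / ∏ i ∈ Finset.range (n + 1), (((k : ℝ) + 1) + i)

/-- B n k = 1/((k+1)...(k+n)) -/
noncomputable def Bfun (n k : ℕ) : ℝ := 1 / ∏ i ∈ Finset.range n, (((k : ℝ) + 1) + i)

lemma prod_pos (k m : ℕ) : 0 < ∏ i ∈ Finset.range m, (((k : ℝ) + 1) + i) := by
  apply Finset.prod_pos; intro i _; positivity

lemma Afun_pos (n k : ℕ) : 0 < Afun n k := by
  unfold Afun; positivity

lemma Bfun_pos (n k : ℕ) : 0 < Bfun n k := by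
  unfold Bfun
  have := prod_pos k n
  positivity

lemma Bfun_eq (n k : ℕ) : Bfun n k = (((k : ℝ) + 1) + n) * Afun n k := by
  unfold Bfun Afun
  rw [Finset.prod_range_succ]
  have h1 := prod_pos k n
  have h2 : (0:ℝ) < ((k : ℝ) + 1) + n := by positivity
  field_simp

lemma Bfun_succ_eq (n k : ℕ) : Bfun n (k + 1) = ((k : ℝ) + 1) * Afun n k := by
  unfold Bfun Afun
  rw [Finset.prod_range_succ']
  have h1 : ∏ i ∈ Finset.range n, ((((k:ℕ)+1 : ℕ) : ℝ) + 1 + i)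
      = ∏ i ∈ Finset.range n, (((k : ℝ) + 1) + ((i:ℕ)+1 : ℕ)) := by
    apply Finset.prod_congr rfl; intro i _; push_cast; ring
  rw [h1]
  have h2 : ∏ i ∈ Finset.range n, (((k : ℝ) + 1) + ((i:ℕ)+1 : ℕ))
      = ∏ i ∈ Finset.range n, (((k : ℝ) + 1) + (i+1:ℝ)) := by
    apply Finset.prod_congr rfl; intro i _; push_cast; ring
  rw [h2]
  have h3 : (0:ℝ) < ∏ i ∈ Finset.range n, (((k : ℝ) + 1) + (i+1:ℝ)) := by
    apply Finset.prod_pos; intro i _; positivity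
  have h4 : (0:ℝ) < (k : ℝ) + 1 := by positivity
  push_cast
  field_simp
  ring

lemma tele (n k : ℕ) : Bfun n k - Bfun n (k + 1) = n * Afun n k := by
  rw [Bfun_eq, Bfun_succ_eq]; ring

lemma Bfun_le (n : ℕ) (hn : 2 ≤ n) (k : ℕ) : Bfun n k ≤ 1 / ((k : ℝ) + 1) ^ 2 := by
  unfold Bfun
  have h1 : ((k:ℝ)+1)^2 ≤ ∏ i ∈ Finset.range n, (((k : ℝ) + 1) + i) := by
    obtain ⟨m, rfl⟩ : ∃ m, n = 2 + m := ⟨n - 2, by omega⟩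
    rw [Finset.prod_range_add]
    have h2 : (1:ℝ) ≤ ∏ i ∈ Finset.range m, (((k : ℝ) + 1) + (2 + i : ℕ)) := by
      calc (1:ℝ) = ∏ _i ∈ Finset.range m, (1:ℝ) := by simp
        _ ≤ _ := by
          apply Finset.prod_le_prod (fun i _ => by norm_num)
          intro i _
          have h0 : (0:ℝ) ≤ ((2+i : ℕ):ℝ) := by positivity
          have h0' : (0:ℝ) ≤ (k:ℝ) := Nat.cast_nonneg k
          nlinarith
    calc ((k:ℝ)+1)^2 ≤ (∏ i ∈ Finset.range 2, (((k : ℝ) + 1) + i)) := by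
          simp [Finset.prod_range_succ]
          have h0' : (0:ℝ) ≤ (k:ℝ) := Nat.cast_nonneg k
          nlinarith
      _ ≤ _ := by
          nth_rewrite 1 [← mul_one (∏ i ∈ Finset.range 2, (((k : ℝ) + 1) + i))]
          apply mul_le_mul_of_nonneg_left h2 (le_of_lt (prod_pos k 2))
  have h3 := prod_pos k n
  have h4 : (0:ℝ) < ((k:ℝ)+1)^2 := by positivity
  exact one_div_le_one_div_of_le h4 h1

lemma summable_Bfun (n : ℕ) (hn : 2 ≤ n) : Summable (Bfun n) := by
  have h : Summable (fun k : ℕ => 1 / ((k : ℝ) + 1) ^ 2) := by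
    have := (Real.summable_one_div_nat_pow (p := 2)).2 (by norm_num)
    have h2 := (summable_nat_add_iff 1).2 this
    refine h2.congr fun k => ?_
    push_cast; ring
  exact Summable.of_nonneg_of_le (fun k => le_of_lt (Bfun_pos n k)) (Bfun_le n hn) h

lemma Afun_le_Bfun (n k : ℕ) : Afun n k ≤ Bfun n k := by
  unfold Afun Bfun
  rw [Finset.prod_range_succ]
  apply one_div_le_one_div_of_le (prod_pos k n)
  nth_rewrite 1 [← mul_one (∏ i ∈ Finset.range n, (((k : ℝ) + 1) + i))]
  apply mul_le_mul_of_nonneg_left _ (le_of_lt (prod_pos k n))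
  have h0 : (0:ℝ) ≤ (n:ℝ) := Nat.cast_nonneg n
  have h0' : (0:ℝ) ≤ (k:ℝ) := Nat.cast_nonneg k
  nlinarith

lemma summable_Afun (n : ℕ) (hn : 2 ≤ n) : Summable (Afun n) :=
  Summable.of_nonneg_of_le (fun k => le_of_lt (Afun_pos n k)) (Afun_le_Bfun n)
    (summable_Bfun n hn)

lemma Bfun_tendsto (n : ℕ) (hn : 2 ≤ n) : Filter.Tendsto (Bfun n) Filter.atTop (nhds 0) := by
  have hle : ∀ k : ℕ, Bfun n k ≤ 1 / ((k:ℝ) + 1) := by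
    intro k
    refine le_trans (Bfun_le n hn k) ?_
    apply one_div_le_one_div_of_le (by positivity)
    have h0' : (0:ℝ) ≤ (k:ℝ) := Nat.cast_nonneg k
    nlinarith
  exact squeeze_zero (fun k => le_of_lt (Bfun_pos n k)) hle
    tendsto_one_div_add_atTop_nhds_zero_nat

lemma tail_hasSum_s10 (n : ℕ) (hn : 2 ≤ n) (j : ℕ) :
    HasSum (fun k => Afun n (k + j)) (Bfun n j / n) := by
  have hn0 : (0:ℝ) < n := by positivity
  rw [hasSum_iff_tendsto_nat_of_nonneg (fun k => le_of_lt (Afun_pos n _))]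
  have hps : ∀ m : ℕ, ∑ k ∈ Finset.range m, Afun n (k + j)
      = (Bfun n j - Bfun n (m + j)) / n := by
    intro m
    have : ∀ k, Afun n (k + j) = ((fun i => Bfun n (i + j)) k - (fun i => Bfun n (i + j)) (k+1)) / n := by
      intro k
      simp only
      rw [show k + 1 + j = (k + j) + 1 by ring, tele]
      field_simp
    rw [Finset.sum_congr rfl (fun k _ => this k), ← Finset.sum_div,
      Finset.sum_range_sub' (fun i => Bfun n (i + j))]
    simp
  simp only [hps]
  have h1 : Filter.Tendsto (fun m : ℕ => Bfun n (m + j)) Filter.atTop (nhds 0) :=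
    (Bfun_tendsto n hn).comp (Filter.tendsto_add_atTop_nat j)
  have h2 : Filter.Tendsto (fun m : ℕ => (Bfun n j - Bfun n (m + j)) / n)
      Filter.atTop (nhds ((Bfun n j - 0) / n)) :=
    (Filter.Tendsto.sub tendsto_const_nhds h1).div_const n
  simpa using h2

lemma H_eq (p k : ℕ) : H (k + 1) p = ∑ j ∈ Finset.range (k + 1), 1 / ((j : ℝ) + 1) ^ p := by
  induction k with
  | zero => simp [H]
  | succ m ih =>
    rw [Finset.sum_range_succ, ← ih]
    unfold H
    rw [Finset.sum_Icc_succ_top (by omega : 1 ≤ m + 1 + 1)]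
    push_cast
    ring

lemma prod_split (n k : ℕ) (hn : 1 ≤ n) :
    ∏ i ∈ Finset.range n, (((k : ℝ) + 1) + i)
      = ((k : ℝ) + 1) * ∏ i ∈ Finset.Icc 1 (n - 1), (((k : ℝ) + 1) + i) := by
  obtain ⟨m, rfl⟩ : ∃ m, n = m + 1 := ⟨n - 1, by omega⟩
  rw [Finset.prod_range_succ']
  simp only [Nat.add_sub_cancel]
  rw [← Finset.Ico_add_one_right_eq_Icc, Finset.prod_Ico_eq_prod_range]
  rw [mul_comm]
  congr 1
  · norm_num
  · apply Finset.prod_congr rfl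
    intro i _
    push_cast
    ring

theorem stmt10 (n p : ℕ) (hn : 2 ≤ n) (hp : 1 ≤ p) :
    (n ! : ℝ) * ∑' k : ℕ, H (k + 1) p / ∏ i ∈ Finset.range (n + 1), (((k : ℝ) + 1) + i)
      = ((n - 1)! : ℝ) * ∑' k : ℕ,
          1 / (((k : ℝ) + 1) ^ (p + 1) * ∏ i ∈ Finset.Icc 1 (n - 1), (((k : ℝ) + 1) + i)) := by
  have hnR : (0:ℝ) < n := by exact_mod_cast (by omega : 0 < n)
  set g : ℕ → ℝ := fun j => 1 / ((j : ℝ) + 1) ^ p with hgdef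
  have hg0 : ∀ j, 0 ≤ g j := fun j => by
    show (0:ℝ) ≤ 1 / ((j : ℝ) + 1) ^ p
    positivity
  have hg1 : ∀ j, g j ≤ 1 := by
    intro j
    show (1:ℝ) / ((j : ℝ) + 1) ^ p ≤ 1
    rw [div_le_one (by positivity)]
    have hj : (0:ℝ) ≤ (j:ℝ) := Nat.cast_nonneg j
    exact one_le_pow₀ (by linarith)
  set F : ℕ → ℕ → ℝ := fun j k => if j ≤ k then g j * Afun n k else 0 with hFdef
  have hF0 : ∀ j k, 0 ≤ F j k := by
    intro j k
    rw [hFdef]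
    dsimp only
    split
    · exact mul_nonneg (hg0 j) (le_of_lt (Afun_pos n k))
    · exact le_refl 0
  have hFle : ∀ j k, F j k ≤ Afun n k := by
    intro j k
    rw [hFdef]
    dsimp only
    split
    · calc g j * Afun n k ≤ 1 * Afun n k :=
            mul_le_mul_of_nonneg_right (hg1 j) (le_of_lt (Afun_pos n k))
        _ = Afun n k := one_mul _
    · exact le_of_lt (Afun_pos n k)
  have hsumF1 : ∀ j, Summable (F j) := fun j =>
    Summable.of_nonneg_of_le (hF0 j) (hFle j) (summable_Afun n hn)
  -- shift lemma
  have hshift : ∀ j, ∑' k : ℕ, (if j ≤ k then Afun n k else 0) = Bfun n j / n := by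
    intro j
    rw [← (tail_hasSum_s10 n hn j).tsum_eq]
    symm
    have h1 : (fun k : ℕ => Afun n (k + j))
        = fun k : ℕ => (if j ≤ k + j then Afun n (k + j) else 0) := by
      funext k; rw [if_pos (Nat.le_add_left j k)]
    rw [h1]
    exact Function.Injective.tsum_eq
      (g := fun k : ℕ => k + j) (f := fun k : ℕ => if j ≤ k then Afun n k else 0)
      (add_left_injective j)
      (fun x hx => by
        have hjx : j ≤ x := by
          by_contra hc
          exact hx (if_neg hc)
        exact ⟨x - j, by show x - j + j = x; omega⟩)
  have hinner : ∀ j, ∑' k, F j k = g j * (Bfun n j / n) := by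
    intro j
    rw [hFdef]
    dsimp only
    have : ∀ k : ℕ, (if j ≤ k then g j * Afun n k else 0)
        = g j * (if j ≤ k then Afun n k else 0) := by
      intro k; split <;> simp
    simp only [this]
    rw [tsum_mul_left, hshift j]
  -- summability of the double family
  have hsumB := summable_Bfun n hn
  have hsum2 : Summable (fun j => ∑' k, F j k) := by
    simp only [hinner]
    apply Summable.of_nonneg_of_le
      (fun j => mul_nonneg (hg0 j) (div_nonneg (le_of_lt (Bfun_pos n j)) (le_of_lt hnR)))
      (fun j => ?_) hsumB
    have h1n : (1:ℝ) ≤ (n:ℝ) := by exact_mod_cast (by omega : 1 ≤ n)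
    calc g j * (Bfun n j / n) ≤ 1 * (Bfun n j / n) :=
          mul_le_mul_of_nonneg_right (hg1 j)
            (div_nonneg (le_of_lt (Bfun_pos n j)) (le_of_lt hnR))
      _ = Bfun n j / n := one_mul _
      _ ≤ Bfun n j := div_le_self (le_of_lt (Bfun_pos n j)) h1n
  have hsumUn : Summable (Function.uncurry F) := by
    exact (summable_prod_of_nonneg (f := Function.uncurry F)
      (fun q => hF0 q.1 q.2)).2 ⟨fun j => hsumF1 j, hsum2⟩
  -- swap
  have hswap : ∑' k, ∑' j, F j k = ∑' j, ∑' k, F j k := Summable.tsum_comm hsumUn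
  -- evaluate inner sum over j
  have hrow : ∀ k, ∑' j, F j k = H (k + 1) p * Afun n k := by
    intro k
    rw [tsum_eq_sum (s := Finset.range (k + 1))
      (fun j hj => by
        rw [hFdef]; dsimp only
        rw [if_neg (by simp at hj; omega)])]
    rw [H_eq, Finset.sum_mul]
    apply Finset.sum_congr rfl
    intro j hj
    rw [hFdef]; dsimp only
    rw [if_pos (by simp at hj; omega)]
  -- LHS
  have hLHS : ∑' k : ℕ, H (k + 1) p / ∏ i ∈ Finset.range (n + 1), (((k : ℝ) + 1) + i)
      = ∑' k, ∑' j, F j k := by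
    apply tsum_congr
    intro k
    rw [hrow k]
    unfold Afun
    rw [div_eq_mul_one_div]
  -- RHS terms
  have hRHSterm : ∀ k : ℕ, (1:ℝ) / (((k : ℝ) + 1) ^ (p + 1) * ∏ i ∈ Finset.Icc 1 (n - 1), (((k : ℝ) + 1) + i))
      = g k * Bfun n k := by
    intro k
    rw [hgdef]
    dsimp only
    unfold Bfun
    rw [prod_split n k (by omega)]
    have h1 : (0:ℝ) < (k:ℝ) + 1 := by positivity
    have h2 : (0:ℝ) < ∏ i ∈ Finset.Icc 1 (n - 1), (((k : ℝ) + 1) + i) := by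
      apply Finset.prod_pos; intro i _; positivity
    rw [pow_succ]
    field_simp
  -- put everything together
  rw [hLHS, hswap]
  have hfinal : ∑' j, ∑' k, F j k = (∑' j, g j * Bfun n j) / n := by
    simp only [hinner]
    rw [← tsum_div_const]
    apply tsum_congr
    intro j
    ring
  rw [hfinal]
  have hR : ∑' k : ℕ, (1:ℝ) / (((k : ℝ) + 1) ^ (p + 1) * ∏ i ∈ Finset.Icc 1 (n - 1), (((k : ℝ) + 1) + i))
      = ∑' j, g j * Bfun n j := tsum_congr hRHSterm
  rw [hR]
  have hfact : (n ! : ℝ) = n * ((n - 1)! : ℝ) := by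
    rw [← Nat.mul_factorial_pred (by omega : n ≠ 0)]
    push_cast
    ring
  rw [hfact]
  field_simp
end

section
/- For integers p ≥ 1 and 0 ≤ n < m, ∑_{k=1}^∞ H_k^(p)/((k+n)(k+m)) = ζ(p+1) - (1/(m-n)) ∑_{j=n}^{m-1} j · ∫₀¹ x^(j-1) Li_{p+1}(x) dx. -/
open scoped BigOperators
open Finset

lemma sum_sq : Summable (fun k : ℕ => 1 / ((k : ℝ) + 1) ^ 2) := by
  have := (summable_nat_add_iff 1).2 (Real.summable_one_div_nat_pow.2 (le_refl 2))
  refine this.congr fun k => ?_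
  push_cast; ring

lemma sum_pow {q : ℕ} (hq : 2 ≤ q) : Summable (fun k : ℕ => 1 / ((k : ℝ) + 1) ^ q) := by
  refine sum_sq.of_nonneg_of_le (fun k => by positivity) fun k => ?_
  have h1 : (1:ℝ) ≤ (k:ℝ) + 1 := by linarith [Nat.cast_nonneg (α := ℝ) k]
  exact one_div_le_one_div_of_le (by positivity) (pow_le_pow_right₀ h1 hq)

lemma H_succ (N p : ℕ) : H (N + 1) p = H N p + 1 / ((N : ℝ) + 1) ^ p := by
  unfold H
  rw [Finset.sum_Icc_succ_top (by omega)]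
  push_cast; ring

lemma H_nonneg (N p : ℕ) : 0 ≤ H N p := Finset.sum_nonneg fun j _ => by positivity

lemma H_le_one (N p : ℕ) (hp : 1 ≤ p) : H N p ≤ H N 1 := by
  refine Finset.sum_le_sum fun j hj => ?_
  simp only [Finset.mem_Icc] at hj
  have h1 : (1:ℝ) ≤ (j:ℝ) := by exact_mod_cast hj.1
  rw [pow_one]
  exact one_div_le_one_div_of_le (by linarith) (le_self_pow₀ (by linarith) (by omega))

lemma H_sqrt (N : ℕ) : H N 1 ≤ 2 * Real.sqrt N := by
  induction N with
  | zero => simp [H]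
  | succ n ih =>
    rw [H_succ, pow_one]
    push_cast
    set a := Real.sqrt ((n:ℝ) + 1) with ha
    set b := Real.sqrt (n:ℝ) with hb
    have h1 : b ^ 2 = n := Real.sq_sqrt (by positivity)
    have h2 : a ^ 2 = (n:ℝ) + 1 := Real.sq_sqrt (by positivity)
    have h3 : 0 ≤ b := Real.sqrt_nonneg _
    have h4 : 0 ≤ a := Real.sqrt_nonneg _
    have h5 : b ≤ a := Real.sqrt_le_sqrt (by linarith)
    have ha1 : 1 ≤ a := by nlinarith
    have ha2 : a ≤ (n:ℝ) + 1 := by nlinarith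
    have key : 1 / ((n:ℝ) + 1) ≤ 2 * (a - b) := by
      rw [div_le_iff₀ (by positivity)]
      nlinarith [mul_nonneg (sub_nonneg.2 h5) (by linarith : (0:ℝ) ≤ 2*((n:ℝ)+1) - a - b)]
    linarith

lemma sumT (p j : ℕ) (hp : 1 ≤ p) :
    Summable (fun k : ℕ => 1 / (((k:ℝ)+1)^p * ((k:ℝ)+j+1))) := by
  refine sum_sq.of_nonneg_of_le (fun k => by positivity) fun k => ?_
  have h1 : (1:ℝ) ≤ (k:ℝ) + 1 := by linarith [Nat.cast_nonneg (α := ℝ) k]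
  refine one_div_le_one_div_of_le (by positivity) ?_
  have h2 : ((k:ℝ)+1)^1 ≤ ((k:ℝ)+1)^p := pow_le_pow_right₀ h1 hp
  rw [pow_one] at h2
  have h3 : (k:ℝ)+1 ≤ (k:ℝ)+j+1 := by
    have := Nat.cast_nonneg (α := ℝ) j; linarith
  calc ((k:ℝ)+1)^2 = ((k:ℝ)+1) * ((k:ℝ)+1) := sq _
    _ ≤ ((k:ℝ)+1)^p * ((k:ℝ)+j+1) := by
        apply mul_le_mul h2 h3 (by positivity) (by positivity)

lemma abel_partial (p j N : ℕ) :
    ∑ k ∈ Finset.range N, H (k+1) p * (1/((k:ℝ)+j+1) - 1/((k:ℝ)+j+2))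
      = (∑ k ∈ Finset.range N, 1 / (((k:ℝ)+1)^p * ((k:ℝ)+j+1)))
        - H N p * (1/((N:ℝ)+j+1)) := by
  induction N with
  | zero => simp [H]
  | succ n ih =>
    rw [Finset.sum_range_succ, Finset.sum_range_succ, ih, H_succ]
    have h1 : (0:ℝ) < (n:ℝ)+j+1 := by positivity
    have h2 : (0:ℝ) < (n:ℝ)+j+2 := by positivity
    have h3 : (0:ℝ) < ((n:ℝ)+1)^p := by positivity
    push_cast
    field_simp
    ring

lemma tendsto_sqrt_nat : Filter.Tendsto (fun n : ℕ => Real.sqrt n) Filter.atTop Filter.atTop := by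
  refine Filter.tendsto_atTop_atTop.mpr fun b => ⟨⌈b*b⌉₊, fun n hn => ?_⟩
  rcases le_or_gt b 0 with hb | hb
  · exact hb.trans (Real.sqrt_nonneg _)
  · have h1 : b*b ≤ (n:ℝ) := le_trans (Nat.le_ceil _) (by exact_mod_cast hn)
    have := Real.sqrt_le_sqrt h1
    rwa [Real.sqrt_mul_self hb.le] at this

lemma r_bound (p j N : ℕ) (hp : 1 ≤ p) :
    H N p * (1/((N:ℝ)+j+1)) ≤ 2 / Real.sqrt N := by
  rcases Nat.eq_zero_or_pos N with rfl | hN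
  · simp [H]
  · have hH : H N p ≤ 2 * Real.sqrt N := (H_le_one N p hp).trans (H_sqrt N)
    have h1 : (0:ℝ) < (N:ℝ)+j+1 := by positivity
    have hs : (0:ℝ) < Real.sqrt N := Real.sqrt_pos.2 (by exact_mod_cast hN)
    calc H N p * (1/((N:ℝ)+j+1)) ≤ (2 * Real.sqrt N) * (1/((N:ℝ)+j+1)) := by
          apply mul_le_mul_of_nonneg_right hH (by positivity)
      _ = 2 * Real.sqrt N / ((N:ℝ)+j+1) := by ring
      _ ≤ 2 / Real.sqrt N := by
          rw [div_le_div_iff₀ h1 hs]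
          have := Real.mul_self_sqrt (Nat.cast_nonneg (α := ℝ) N)
          have := Nat.cast_nonneg (α := ℝ) j
          nlinarith
lemma r_tendsto (p j : ℕ) (hp : 1 ≤ p) :
    Filter.Tendsto (fun N : ℕ => H N p * (1/((N:ℝ)+j+1))) Filter.atTop (nhds 0) := by
  have hb : Filter.Tendsto (fun N : ℕ => 2 / Real.sqrt N) Filter.atTop (nhds 0) := by
    have := (tendsto_sqrt_nat.inv_tendsto_atTop).const_mul (2:ℝ)
    simpa [div_eq_mul_inv] using this
  refine squeeze_zero (fun N => ?_) (fun N => r_bound p j N hp) hb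
  have : (0:ℝ) < (N:ℝ)+j+1 := by positivity
  have := H_nonneg N p
  positivity

lemma abel_hasSum (p j : ℕ) (hp : 1 ≤ p) :
    HasSum (fun k : ℕ => H (k+1) p * (1/((k:ℝ)+j+1) - 1/((k:ℝ)+j+2)))
      (∑' k : ℕ, 1/(((k:ℝ)+1)^p * ((k:ℝ)+j+1))) := by
  set T := ∑' k : ℕ, 1/(((k:ℝ)+1)^p * ((k:ℝ)+j+1)) with hT
  have hg := sumT p j hp
  have fnonneg : ∀ k : ℕ, 0 ≤ H (k+1) p * (1/((k:ℝ)+j+1) - 1/((k:ℝ)+j+2)) := by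
    intro k
    have h1 : (0:ℝ) < (k:ℝ)+j+1 := by positivity
    have h2 : (0:ℝ) < (k:ℝ)+j+2 := by positivity
    have : 1/((k:ℝ)+j+2) ≤ 1/((k:ℝ)+j+1) := one_div_le_one_div_of_le h1 (by linarith)
    exact mul_nonneg (H_nonneg _ _) (by linarith)
  have hPle : ∀ N, ∑ k ∈ Finset.range N, 1/(((k:ℝ)+1)^p * ((k:ℝ)+j+1)) ≤ T :=
    fun N => hg.sum_le_tsum _ (fun k _ => by positivity)
  have hble : ∀ N, ∑ k ∈ Finset.range N,
      H (k+1) p * (1/((k:ℝ)+j+1) - 1/((k:ℝ)+j+2)) ≤ T := by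
    intro N
    rw [abel_partial]
    have hr : 0 ≤ H N p * (1/((N:ℝ)+j+1)) := by
      have : (0:ℝ) < (N:ℝ)+j+1 := by positivity
      have := H_nonneg N p
      positivity
    linarith [hPle N]
  have hsum : Summable (fun k : ℕ => H (k+1) p * (1/((k:ℝ)+j+1) - 1/((k:ℝ)+j+2))) :=
    summable_of_sum_range_le fnonneg hble
  have ht1 := hsum.hasSum.tendsto_sum_nat
  have ht2 : Filter.Tendsto
      (fun N => ∑ k ∈ Finset.range N, H (k+1) p * (1/((k:ℝ)+j+1) - 1/((k:ℝ)+j+2)))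
      Filter.atTop (nhds (T - 0)) := by
    have hP := hg.hasSum.tendsto_sum_nat
    have := hP.sub (r_tendsto p j hp)
    refine this.congr fun N => ?_
    rw [abel_partial]
  rw [sub_zero] at ht2
  have : (∑' k : ℕ, H (k+1) p * (1/((k:ℝ)+j+1) - 1/((k:ℝ)+j+2))) = T :=
    tendsto_nhds_unique ht1 ht2
  exact this ▸ hsum.hasSum

lemma pow_int_Ioc (M : ℕ) : ∫ x in Set.Ioc (0:ℝ) 1, x ^ M = 1 / ((M:ℝ) + 1) := by
  rw [← intervalIntegral.integral_of_le zero_le_one, integral_pow]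
  simp

lemma integral_Li (q j : ℕ) (hq : 2 ≤ q) (hj : 1 ≤ j) :
    ∫ x in (0:ℝ)..1, x ^ (j-1) * Li q x
      = ∑' k : ℕ, 1 / (((k:ℝ)+1)^q * ((k:ℝ)+j+1)) := by
  obtain ⟨i, rfl⟩ : ∃ i, j = i + 1 := ⟨j-1, (Nat.succ_pred_eq_of_pos hj).symm⟩
  simp only [Nat.add_sub_cancel]
  set F : ℕ → ℝ → ℝ := fun k x => x ^ i * (x ^ (k+1) / ((k:ℝ)+1)^q) with hF
  have hcont : ∀ k, Continuous (F k) := by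
    intro k; apply Continuous.mul (continuous_pow i)
    exact (continuous_pow (k+1)).div_const _
  have hint : ∀ k, MeasureTheory.Integrable (F k)
      (MeasureTheory.volume.restrict (Set.Ioc (0:ℝ) 1)) :=
    fun k => (hcont k).integrableOn_Ioc
  have hval : ∀ k : ℕ, ∫ x in Set.Ioc (0:ℝ) 1, F k x
      = 1 / (((k:ℝ)+1)^q * ((k:ℝ)+(i+1:ℕ)+1)) := by
    intro k
    have : ∀ x : ℝ, F k x = (1/((k:ℝ)+1)^q) * x ^ (i+k+1) := by
      intro x; rw [hF]; ring
    simp only [this]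
    rw [MeasureTheory.integral_const_mul, pow_int_Ioc]
    push_cast; field_simp; ring
  have hnorm : ∀ k : ℕ, (∫ x in Set.Ioc (0:ℝ) 1, ‖F k x‖)
      = 1 / (((k:ℝ)+1)^q * ((k:ℝ)+(i+1:ℕ)+1)) := by
    intro k
    rw [← hval k]
    apply MeasureTheory.setIntegral_congr_fun measurableSet_Ioc
    intro x hx
    have hx0 : 0 ≤ x := le_of_lt hx.1
    have : 0 ≤ F k x := by rw [hF]; positivity
    simp [Real.norm_eq_abs, abs_of_nonneg this]
  have hsummable : Summable fun k : ℕ => 1 / (((k:ℝ)+1)^q * ((k:ℝ)+(i+1:ℕ)+1)) := by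
    have := sumT q (i+1) (by omega)
    exact this
  have hsum2 : Summable fun k : ℕ => ∫ x in Set.Ioc (0:ℝ) 1, ‖F k x‖ := by
    refine hsummable.congr fun k => ?_; rw [hnorm]
  rw [intervalIntegral.integral_of_le zero_le_one]
  have hptwise : ∀ x ∈ Set.Ioc (0:ℝ) 1, x ^ i * Li q x = ∑' k, F k x := by
    intro x _
    rw [Li, hF, ← tsum_mul_left]
  calc (∫ x in Set.Ioc (0:ℝ) 1, x ^ i * Li q x)
      = ∫ x in Set.Ioc (0:ℝ) 1, ∑' k, F k x :=
        MeasureTheory.setIntegral_congr_fun measurableSet_Ioc hptwise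
    _ = ∑' k, ∫ x in Set.Ioc (0:ℝ) 1, F k x :=
        (MeasureTheory.integral_tsum_of_summable_integral_norm hint hsum2).symm
    _ = ∑' k : ℕ, 1 / (((k:ℝ)+1)^q * ((k:ℝ)+(i+1:ℕ)+1)) := tsum_congr hval

lemma key_j (p j : ℕ) (hp : 1 ≤ p) :
    (j:ℝ) * ∫ x in (0:ℝ)..1, x ^ (j-1) * Li (p+1) x
      = zetaS (p+1) - ∑' k : ℕ, 1 / (((k:ℝ)+1)^p * ((k:ℝ)+j+1)) := by
  rcases Nat.eq_zero_or_pos j with rfl | hj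
  · have h0 : (∑' k : ℕ, 1 / (((k:ℝ)+1)^p * ((k:ℝ)+(0:ℕ)+1))) = zetaS (p+1) := by
      rw [zetaS]
      refine tsum_congr fun k => ?_
      rw [pow_succ]
      push_cast
      ring
    rw [h0]
    simp
  · rw [integral_Li (p+1) j (by omega) hj, ← tsum_mul_left, zetaS,
      ← Summable.tsum_sub (sum_pow (q := p+1) (by omega)) (sumT p j hp)]
    refine tsum_congr fun k => ?_
    have h1 : ((k:ℝ)+1) ≠ 0 := by positivity
    have h2 : ((k:ℝ)+(j:ℝ)+1) ≠ 0 := by positivity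
    rw [pow_succ]
    field_simp
    ring

lemma telescope (k n m : ℕ) (hnm : n ≤ m) :
    ∑ j ∈ Finset.Ico n m, (1/((k:ℝ)+j+1) - 1/((k:ℝ)+j+2))
      = 1/((k:ℝ)+n+1) - 1/((k:ℝ)+m+1) := by
  rw [Finset.sum_Ico_eq_sum_range]
  have h := Finset.sum_range_sub' (fun i : ℕ => 1/((k:ℝ)+n+i+1)) (m-n)
  have heq : ∀ i ∈ Finset.range (m-n),
      (1/((k:ℝ)+((n+i:ℕ):ℝ)+1) - 1/((k:ℝ)+((n+i:ℕ):ℝ)+2))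
        = 1/((k:ℝ)+n+((i:ℕ):ℝ)+1) - 1/((k:ℝ)+n+(((i+1:ℕ)):ℝ)+1) := by
    intro i _
    push_cast
    ring
  rw [Finset.sum_congr rfl heq, h]
  push_cast [Nat.cast_sub hnm]
  ring

theorem stmt13 (p n m : ℕ) (hp : 1 ≤ p) (hnm : n < m) :
    ∑' k : ℕ, H (k + 1) p / ((((k : ℝ) + 1) + n) * (((k : ℝ) + 1) + m))
      = zetaS (p + 1) - (1 / ((m : ℝ) - n)) *
          ∑ j ∈ Finset.Ico n m, (j : ℝ) * ∫ x in (0:ℝ)..1, x ^ (j - 1) * Li (p + 1) x := by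
  have hmn : (0:ℝ) < (m:ℝ) - n := by
    have : (n:ℝ) < m := by exact_mod_cast hnm
    linarith
  have h3 : ((m:ℝ)-n) ≠ 0 := ne_of_gt hmn
  have hpt : ∀ k : ℕ, H (k + 1) p / ((((k : ℝ) + 1) + n) * (((k : ℝ) + 1) + m))
      = (1/((m:ℝ)-n)) * ∑ j ∈ Finset.Ico n m,
          H (k+1) p * (1/((k:ℝ)+j+1) - 1/((k:ℝ)+j+2)) := by
    intro k
    rw [← Finset.mul_sum, telescope k n m hnm.le]
    have h1 : ((k:ℝ)+1+(n:ℝ)) ≠ 0 := by positivity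
    have h2 : ((k:ℝ)+1+(m:ℝ)) ≠ 0 := by positivity
    have h4 : ((k:ℝ)+(n:ℝ)+1) ≠ 0 := by positivity
    have h5 : ((k:ℝ)+(m:ℝ)+1) ≠ 0 := by positivity
    field_simp
    ring_nf
    try exact Or.inl trivial
  rw [tsum_congr hpt, tsum_mul_left]
  have hswap : (∑' k : ℕ, ∑ j ∈ Finset.Ico n m,
        H (k+1) p * (1/((k:ℝ)+j+1) - 1/((k:ℝ)+j+2)))
      = ∑ j ∈ Finset.Ico n m, ∑' k : ℕ, 1 / (((k:ℝ)+1)^p * ((k:ℝ)+j+1)) := by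
    rw [Summable.tsum_finsetSum (fun j _ => (abel_hasSum p j hp).summable)]
    exact Finset.sum_congr rfl fun j _ => (abel_hasSum p j hp).tsum_eq
  rw [hswap]
  have hkey : ∀ j ∈ Finset.Ico n m,
      (j:ℝ) * ∫ x in (0:ℝ)..1, x ^ (j - 1) * Li (p + 1) x
        = zetaS (p+1) - ∑' k : ℕ, 1 / (((k:ℝ)+1)^p * ((k:ℝ)+j+1)) :=
    fun j _ => key_j p j hp
  rw [Finset.sum_congr rfl hkey, Finset.sum_sub_distrib, Finset.sum_const, Nat.card_Ico,
    nsmul_eq_mul, Nat.cast_sub hnm.le]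
  field_simp
  ring
end
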